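/- Let N be a finite nontrivial f-near-ring with Nat.card N = p^q, where p and q are prime numbers, and suppose N is not a near-field, i.e. there exists n : N with n ≠ 0 that is not a unit. Then the number of units of N equals p − 1, and for any two units a, b of N with a ≠ b, the element a − b is a unit; in particular N is an a-near-ring and its units together with 0 form a field isomorphic to ℤ_p. -/

import Mathlib

/-! Units act freely on the nonzero elements by right multiplication (the f-property), and a
stabilizer argument shows that they then also act freely by left multiplication. Hence the number
of units divides `|W| - 1` for every additive subgroup `W` closed under left multiplication.
Taking `W = N` and `W = N n` for a nonzero nonunit `n`, of orders `p ^ q` and `p ^ r` with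
`0 < r < q`, it divides `gcd (p ^ q - 1, p ^ r - 1) = p - 1`. On the other hand the additive
subgroup generated by `1` is a copy of `ZMod t`, `t` the additive order of `1`, whose units
inject into those of `N`; so `φ t ≤ p - 1`, which forces `t = p`, and then the `p - 1` units of
`ZMod p` are all the units of `N`. -/

theorem MulAction.card_dvd_card_of_stabilizer_eq_bot {G X : Type*} [Group G] [MulAction G X]
    (h : ∀ x : X, stabilizer G x = ⊥) : Nat.card G ∣ Nat.card X :=
  ⟨_, by rw [Nat.card_congr (selfEquivOrbitsQuotientProd h), Nat.card_prod, mul_comm]⟩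

theorem Subgroup.card_dvd_card_of_mul_right_free {M : Type*} [Monoid M] (H : Subgroup Mˣ)
    (S : Set M) (hS : ∀ g ∈ H, ∀ x ∈ S, x * (g : M) ∈ S)
    (hfree : ∀ g ∈ H, ∀ x ∈ S, x * (g : M) = x → g = 1) : Nat.card H ∣ Nat.card S := by
  let _ : MulAction H S :=
    { smul g x := ⟨x * ↑(g⁻¹ : Mˣ), hS _ (inv_mem g.2) _ x.2⟩
      one_smul x := Subtype.ext (by change (x : M) * ↑(((1 : H) : Mˣ)⁻¹) = x; simp)
      mul_smul g h x := Subtype.ext (by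
        change (x : M) * ↑(((g * h : H) : Mˣ)⁻¹) = x * ↑((h : Mˣ)⁻¹) * ↑((g : Mˣ)⁻¹)
        simp [mul_assoc]) }
  refine MulAction.card_dvd_card_of_stabilizer_eq_bot fun x =>
    (Subgroup.eq_bot_iff_forall _).2 fun g hg => ?_
  have hx : (x : M) * ↑(g⁻¹ : Mˣ) = x := congrArg Subtype.val hg
  simpa using hfree _ (inv_mem g.2) x x.2 hx

theorem Nat.dvd_sub_one_of_dvd_pow_sub_one {d p q r : ℕ} (hq : q.Prime) (hr : 0 < r)
    (hrq : r < q) (hdq : d ∣ p ^ q - 1) (hdr : d ∣ p ^ r - 1) : d ∣ p - 1 := by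
  have hqr : Nat.gcd q r = 1 :=
    (hq.coprime_iff_not_dvd).2 (Nat.not_dvd_of_pos_of_lt hr hrq)
  simpa [Nat.pow_sub_one_gcd_pow_sub_one, hqr] using Nat.dvd_gcd hdq hdr

theorem Nat.eq_of_dvd_prime_pow_of_totient_le {p k t : ℕ} (hp : p.Prime) (ht : t ∣ p ^ k)
    (ht1 : t ≠ 1) (htot : t.totient ≤ p - 1) : t = p := by
  obtain ⟨i, -, rfl⟩ := (Nat.dvd_prime_pow hp).1 ht
  have hi : 0 < i := Nat.pos_of_ne_zero fun h => ht1 (by simp [h])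
  rw [Nat.totient_prime_pow hp hi] at htot
  have hle : p ^ (i - 1) ≤ 1 :=
    Nat.le_of_mul_le_mul_right (by simpa using htot) (Nat.sub_pos_of_lt hp.one_lt)
  have : i - 1 = 0 := by
    by_contra h
    exact (Nat.one_lt_pow h hp.one_lt).not_ge hle
  rw [show i = 1 by omega, pow_one]

namespace NearRing

variable {N : Type*} [AddGroup N] [Monoid N]

section ZModCast

variable (n : ℕ) (hn : n • (1 : N) = 0)

def zmodCast : ZMod n →+ N := ZMod.lift n ⟨zmultiplesHom N 1, by simpa using hn⟩

theorem zmodCast_intCast (m : ℤ) : zmodCast n hn m = m • 1 := ZMod.lift_coe _ _ m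

theorem zmodCast_one : zmodCast n hn 1 = 1 := by
  simpa using zmodCast_intCast n hn 1

theorem zmodCast_injective (h : addOrderOf (1 : N) = n) : Function.Injective (zmodCast n hn) :=
  (ZMod.lift_injective n).2 fun m hm => by
    rw [ZMod.intCast_zmod_eq_zero_iff_dvd, ← h]
    exact addOrderOf_dvd_iff_zsmul_eq_zero.2 hm

end ZModCast

variable [RightDistribClass N]

def mulRight (c : N) : N →+ N := AddMonoidHom.mk' (· * c) fun a b => add_mul a b c

@[simp] theorem mulRight_apply (c a : N) : mulRight c a = a * c := rfl

protected theorem zero_mul (a : N) : 0 * a = 0 := (mulRight a).map_zero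

protected theorem sub_mul (a b c : N) : (a - b) * c = a * c - b * c := (mulRight c).map_sub a b

theorem zsmul_one_mul (m : ℤ) (a : N) : (m • (1 : N)) * a = m • a := by
  simpa using (mulRight a).map_zsmul m 1

theorem card_mul_eq_self_dvd_card (w : N) : Nat.card {x : N | x * w = w} ∣ Nat.card N := by
  have e : {x : N | x * w = w} ≃ (mulRight w).ker :=
    (Equiv.subRight 1).subtypeEquiv fun x => by
      simp [AddMonoidHom.mem_ker, NearRing.sub_mul, sub_eq_zero]
  exact Nat.card_congr e ▸ (mulRight w).ker.card_addSubgroup_dvd_card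

section ZModCast

variable (n : ℕ) (hn : n • (1 : N) = 0)

theorem zmodCast_mul (x y : ZMod n) :
    zmodCast n hn (x * y) = zmodCast n hn x * zmodCast n hn y := by
  obtain ⟨a, rfl⟩ := ZMod.intCast_surjective x
  obtain ⟨b, rfl⟩ := ZMod.intCast_surjective y
  rw [← Int.cast_mul, zmodCast_intCast, zmodCast_intCast, zmodCast_intCast, zsmul_one_mul,
    mul_zsmul]

def zmodCastHom : ZMod n →* N where
  toFun := zmodCast n hn
  map_one' := zmodCast_one n hn
  map_mul' := zmodCast_mul n hn

end ZModCast

theorem totient_addOrderOf_one_le_card_units [Finite N] :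
    (addOrderOf (1 : N)).totient ≤ Nat.card Nˣ := by
  have : NeZero (addOrderOf (1 : N)) := ⟨(addOrderOf_pos 1).ne'⟩
  have hn := addOrderOf_nsmul_eq_zero (1 : N)
  calc (addOrderOf (1 : N)).totient = Nat.card (ZMod (addOrderOf (1 : N)))ˣ := by
        rw [Nat.card_eq_fintype_card, ZMod.card_units_eq_totient]
    _ ≤ Nat.card Nˣ := Nat.card_le_card_of_injective _ <|
        Units.map_injective (f := zmodCastHom _ hn) (zmodCast_injective _ hn rfl)

theorem stabilizer_units_eq_bot [Finite N] (hf : ∀ u : Nˣ, u ≠ 1 → ∀ n : N, n * u = n → n = 0)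
    {w : N} (hw : w ≠ 0) : MulAction.stabilizer Nˣ w = ⊥ := by
  set H := MulAction.stabilizer Nˣ w
  -- `H` acts freely by right multiplication on `{x | x * w = w}`, a coset of `ker (· * w)`, and
  -- on `{0}ᶜ`; so `|H|` divides both `|N|` and `|N| - 1`.
  have hfree : ∀ S : Set N, 0 ∉ S → (∀ g ∈ H, ∀ x ∈ S, x * (g : N) ∈ S) →
      Nat.card H ∣ Nat.card S := fun S h0 hS =>
    H.card_dvd_card_of_mul_right_free S hS fun g _ x hx hxg => by
      by_contra hg
      exact h0 (hf g hg x hxg ▸ hx)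
  have hfix : Nat.card H ∣ Nat.card N := by
    refine (hfree {x | x * w = w} ?_ ?_).trans (card_mul_eq_self_dvd_card w)
    · simpa [NearRing.zero_mul] using hw.symm
    · intro g hg x hx
      rw [MulAction.mem_stabilizer_iff, Units.smul_def, smul_eq_mul] at hg
      show x * g * w = w
      rw [mul_assoc, hg, hx]
  have hnonzero : Nat.card H ∣ Nat.card N - 1 := by
    have := hfree {0}ᶜ (by simp) fun g _ x hx h => hx <| by
      simpa [NearRing.zero_mul] using congrArg (· * ((g⁻¹ : Nˣ) : N)) h
    rwa [Nat.card_coe_set_eq, Set.ncard_compl, Set.ncard_singleton] at this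
  refine Subgroup.eq_bot_of_card_eq H (Nat.dvd_one.1 ?_)
  simpa [Nat.sub_sub_self Nat.card_pos] using Nat.dvd_sub hfix hnonzero

theorem card_units_dvd_card_sub_one [Finite N]
    (hf : ∀ u : Nˣ, u ≠ 1 → ∀ n : N, n * u = n → n = 0) (hzero : ∀ a : N, a * 0 = 0)
    (W : AddSubgroup N) (hW : ∀ a, ∀ x ∈ W, a * x ∈ W) : Nat.card Nˣ ∣ Nat.card W - 1 := by
  let S : SubMulAction Nˣ N :=
    { carrier := (W : Set N) \ {0}
      smul_mem' u x hx := ⟨hW _ _ hx.1, fun h => hx.2 <| by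
        simpa [hzero, Units.smul_def] using congrArg (((u⁻¹ : Nˣ) : N) * ·) h⟩ }
  have hS : Nat.card S = Nat.card W - 1 := by
    rw [← SetLike.coe_sort_coe, Nat.card_coe_set_eq]
    change ((W : Set N) \ {0}).ncard = _
    rw [Set.ncard_sdiff_singleton_of_mem W.zero_mem, ← Nat.card_coe_set_eq, SetLike.coe_sort_coe]
  refine hS ▸ MulAction.card_dvd_card_of_stabilizer_eq_bot fun x => ?_
  rw [SubMulAction.stabilizer_of_subMul]
  exact stabilizer_units_eq_bot hf x.2.2

theorem card_units_dvd_sub_one_of_not_isUnit [Finite N]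
    (hf : ∀ u : Nˣ, u ≠ 1 → ∀ n : N, n * u = n → n = 0) (hzero : ∀ a : N, a * 0 = 0)
    {p q : ℕ} (hp : p.Prime) (hq : q.Prime) (hcard : Nat.card N = p ^ q)
    {n : N} (hn0 : n ≠ 0) (hn : ¬IsUnit n) : Nat.card Nˣ ∣ p - 1 := by
  set W := (mulRight n).range
  have hWmul : ∀ a, ∀ x ∈ W, a * x ∈ W := by
    rintro a _ ⟨y, rfl⟩
    exact ⟨a * y, mul_assoc a y n⟩
  have hnW : n ∈ W := ⟨1, one_mul n⟩
  obtain ⟨r, hr_le, hr⟩ := (Nat.dvd_prime_pow hp).1 (hcard ▸ W.card_addSubgroup_dvd_card)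
  have hr_ne_zero : r ≠ 0 := by
    rintro rfl
    have hW : W = ⊥ := W.eq_bot_of_card_eq (by simpa using hr)
    exact hn0 (AddSubgroup.mem_bot.1 (hW ▸ hnW))
  have hr_ne : r ≠ q := by
    rintro rfl
    have hW : W = ⊤ := W.card_eq_iff_eq_top.1 (hr.trans hcard.symm)
    obtain ⟨y, hy⟩ : (1 : N) ∈ W := hW ▸ AddSubgroup.mem_top 1
    exact hn (IsUnit.of_mul_eq_one_right y hy)
  refine Nat.dvd_sub_one_of_dvd_pow_sub_one hq (Nat.pos_of_ne_zero hr_ne_zero) (by omega) ?_ ?_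
  · simpa [hcard] using card_units_dvd_card_sub_one hf hzero ⊤ fun a x _ => AddSubgroup.mem_top _
  · simpa [hr] using card_units_dvd_card_sub_one hf hzero W hWmul

theorem addOrderOf_one_eq_of_card_units_dvd [Finite N] (hnt : (0 : N) ≠ 1) {p q : ℕ}
    (hp : p.Prime) (hcard : Nat.card N = p ^ q) (hU : Nat.card Nˣ ∣ p - 1) :
    addOrderOf (1 : N) = p :=
  Nat.eq_of_dvd_prime_pow_of_totient_le hp (hcard ▸ addOrderOf_dvd_natCard 1)
    (by simpa using hnt.symm)
    (totient_addOrderOf_one_le_card_units.trans (Nat.le_of_dvd (Nat.sub_pos_of_lt hp.one_lt) hU))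

theorem card_units_eq_of_addOrderOf_one [Finite N] {p : ℕ} (hp : p.Prime)
    (h1 : addOrderOf (1 : N) = p) (hU : Nat.card Nˣ ∣ p - 1) : Nat.card Nˣ = p - 1 :=
  le_antisymm (Nat.le_of_dvd (Nat.sub_pos_of_lt hp.one_lt) hU)
    (by simpa [h1, Nat.totient_prime hp] using totient_addOrderOf_one_le_card_units (N := N))

section PrimeField

variable {p : ℕ} [Fact p.Prime] (hchar : p • (1 : N) = 0)

theorem isUnit_zmodCast {x : ZMod p} (hx : x ≠ 0) : IsUnit (zmodCast p hchar x) :=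
  (isUnit_iff_ne_zero.2 hx).map (zmodCastHom p hchar)

theorem range_zmodCast [Finite N] (hinj : Function.Injective (zmodCast p hchar))
    (hU : Nat.card Nˣ = p - 1) : Set.range (zmodCast p hchar) = {x | x = 0 ∨ IsUnit x} := by
  have hbij : Function.Bijective (Units.map (zmodCastHom p hchar)) := by
    refine (Nat.bijective_iff_injective_and_card _).2 ⟨Units.map_injective hinj, ?_⟩
    rw [hU, Nat.card_eq_fintype_card, ZMod.card_units]
  ext y
  constructor
  · rintro ⟨x, rfl⟩
    by_cases hx : x = 0
    · exact Or.inl (hx ▸ map_zero _)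
    · exact Or.inr (isUnit_zmodCast hchar hx)
  · rintro (rfl | hy)
    · exact ⟨0, map_zero _⟩
    · obtain ⟨c, hc⟩ := hbij.2 hy.unit
      exact ⟨c, congrArg Units.val hc⟩

theorem isUnit_sub_of_range_zmodCast
    (hrange : Set.range (zmodCast p hchar) = {x | x = 0 ∨ IsUnit x})
    {a b : N} (ha : IsUnit a) (hb : IsUnit b) (hab : a ≠ b) : IsUnit (a - b) := by
  obtain ⟨x, rfl⟩ : a ∈ Set.range (zmodCast p hchar) := hrange ▸ Or.inr ha
  obtain ⟨y, rfl⟩ : b ∈ Set.range (zmodCast p hchar) := hrange ▸ Or.inr hb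
  rw [← map_sub]
  exact isUnit_zmodCast hchar (sub_ne_zero.2 (ne_of_apply_ne _ hab))

end PrimeField

end NearRing

/-- A finite nontrivial f-near-ring of order `p^q` (`p`, `q` prime)
which is not a near-field has exactly `p - 1` units, is an a-near-ring, and its
units together with `0` form a field isomorphic to `ℤ_p`. -/
theorem stmt18 {N : Type*} [AddGroup N] [Mul N] [One N] [Finite N]
    (hassoc : ∀ a b c : N, (a * b) * c = a * (b * c))
    (hdist : ∀ a b c : N, (a + b) * c = a * c + b * c)
    (honel : ∀ a : N, 1 * a = a) (honer : ∀ a : N, a * 1 = a)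
    (hzero : ∀ a : N, a * 0 = 0)
    (hf : ∀ u : N, (∃ v : N, u * v = 1 ∧ v * u = 1) → u ≠ 1 →
      ∀ n : N, n * u = n → n = 0)
    (hnt : (0 : N) ≠ 1)
    (p q : ℕ) (hp : Nat.Prime p) (hq : Nat.Prime q)
    (hcard : Nat.card N = p ^ q)
    (hnnf : ∃ n : N, n ≠ 0 ∧ ¬ ∃ v : N, n * v = 1 ∧ v * n = 1) :
    Nat.card {u : N // ∃ v : N, u * v = 1 ∧ v * u = 1} = p - 1 ∧
    (∀ a b : N, (∃ v : N, a * v = 1 ∧ v * a = 1) →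
      (∃ v : N, b * v = 1 ∧ v * b = 1) → a ≠ b →
      ∃ v : N, (a - b) * v = 1 ∧ v * (a - b) = 1) ∧
    (∃ f : ZMod p → N, Function.Injective f ∧
      Set.range f = {n : N | n = 0 ∨ ∃ v : N, n * v = 1 ∧ v * n = 1} ∧
      (∀ x y : ZMod p, f (x + y) = f x + f y) ∧
      (∀ x y : ZMod p, f (x * y) = f x * f y) ∧
      f 1 = 1) := by
  let _ : Monoid N := { mul_assoc := hassoc, one_mul := honel, mul_one := honer }
  have : RightDistribClass N := ⟨hdist⟩
  have : Fact p.Prime := ⟨hp⟩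
  simp only [← isUnit_iff_exists] at hf hnnf ⊢
  have hf' : ∀ u : Nˣ, u ≠ 1 → ∀ n : N, n * u = n → n = 0 := fun u hu =>
    hf u u.isUnit (by rwa [Ne, Units.val_eq_one])
  obtain ⟨n, hn0, hn⟩ := hnnf
  have hdvd := NearRing.card_units_dvd_sub_one_of_not_isUnit hf' hzero hp hq hcard hn0 hn
  have h1 := NearRing.addOrderOf_one_eq_of_card_units_dvd hnt hp hcard hdvd
  have hU := NearRing.card_units_eq_of_addOrderOf_one hp h1 hdvd
  have hchar : p • (1 : N) = 0 := h1 ▸ addOrderOf_nsmul_eq_zero 1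
  have hinj := NearRing.zmodCast_injective p hchar h1
  have hrange := NearRing.range_zmodCast hchar hinj hU
  refine ⟨?_, fun a b ha hb hab => NearRing.isUnit_sub_of_range_zmodCast hchar hrange ha hb hab,
    NearRing.zmodCast p hchar, hinj, hrange, map_add _, NearRing.zmodCast_mul p hchar,
    NearRing.zmodCast_one p hchar⟩
  rw [← hU]
  exact Nat.card_congr
    ⟨fun u => u.2.unit, fun u => ⟨u, u.isUnit⟩, fun _ => rfl, fun _ => Units.ext rfl⟩
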